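/- arXiv:math/0408365 — 9 statements merged into one kernel-verified Lean document; each statement's English description precedes it below -/
import Mathlib

section
/- Let (E, 𝓕) be an accessible nonempty set system over a finite set E. Then (E, 𝓕) is an antimatroid if and only if (E, 𝓕) satisfies the interval property without upper bounds. -/
open Finset

variable {α : Type*}

/-- A set system is accessible: each nonempty feasible set has an element
whose removal keeps it feasible. -/
def Accessible [DecidableEq α] (𝓕 : Finset (Finset α)) : Prop :=
  ∀ X ∈ 𝓕, X.Nonempty → ∃ x ∈ X, X.erase x ∈ 𝓕

/-- Axiom (A2): for X, Y feasible with X ⊄ Y there is x ∈ X − Y with Y ∪ {x} feasible. -/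
def Exchange [DecidableEq α] (𝓕 : Finset (Finset α)) : Prop :=
  ∀ X ∈ 𝓕, ∀ Y ∈ 𝓕, ¬ X ⊆ Y → ∃ x ∈ X \ Y, insert x Y ∈ 𝓕

/-- An antimatroid: a nonempty set system satisfying (A1) and (A2). -/
def IsAntimatroid [DecidableEq α] (𝓕 : Finset (Finset α)) : Prop :=
  𝓕.Nonempty ∧ Accessible 𝓕 ∧ Exchange 𝓕

/-- Feasible continuations Γ(X) = {x ∈ E − X : X ∪ {x} ∈ 𝓕}. -/
def Gamma [Fintype α] [DecidableEq α] (𝓕 : Finset (Finset α)) (X : Finset α) : Finset α :=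
  Finset.univ.filter (fun x => x ∉ X ∧ insert x X ∈ 𝓕)

/-- The k-truncation 𝓕_k = {X ∈ 𝓕 : |X| ≤ k}. -/
def trunc [DecidableEq α] (𝓕 : Finset (Finset α)) (k : ℕ) : Finset (Finset α) :=
  𝓕.filter (fun X => X.card ≤ k)

/-- A k-truncated antimatroid: the k-truncation of some antimatroid. -/
def IsKTruncAntimatroid [DecidableEq α] (𝓕 : Finset (Finset α)) (k : ℕ) : Prop :=
  ∃ 𝓕' : Finset (Finset α), IsAntimatroid 𝓕' ∧ 𝓕 = trunc 𝓕' k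

/-- The rank of a set system: maximal cardinality of a feasible set. -/
def rank (𝓕 : Finset (Finset α)) : ℕ := 𝓕.sup Finset.card

/-- The k-truncated interval property without upper bounds:
for feasible X ⊆ Y with |X| ≤ k−1, |Y| ≤ k−1 and x ∉ Y,
X ∪ {x} feasible implies Y ∪ {x} feasible. -/
def TruncIntervalWUB [DecidableEq α] (𝓕 : Finset (Finset α)) (k : ℕ) : Prop :=
  ∀ X ∈ 𝓕, ∀ Y ∈ 𝓕, X.card < k → Y.card < k → X ⊆ Y →
    ∀ x ∉ Y, insert x X ∈ 𝓕 → insert x Y ∈ 𝓕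

/-- The interval property without upper bounds. -/
def IntervalWUB [DecidableEq α] (𝓕 : Finset (Finset α)) : Prop :=
  ∀ X ∈ 𝓕, ∀ Y ∈ 𝓕, X ⊆ Y → ∀ x ∉ Y, insert x X ∈ 𝓕 → insert x Y ∈ 𝓕

/-- A monotone linkage function: π(x, ·) is antitone with respect to inclusion. -/
def MonoLinkage (π : α → Finset α → ℝ) : Prop :=
  ∀ x : α, ∀ X Y : Finset α, X ⊆ Y → π x Y ≤ π x X

/-- Z is a maximal feasible subset of W. -/
def MaxFeasible [DecidableEq α] (𝓕 : Finset (Finset α)) (W Z : Finset α) : Prop :=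
  Z ∈ 𝓕 ∧ Z ⊆ W ∧ ∀ Z' ∈ 𝓕, Z ⊆ Z' → Z' ⊆ W → Z' = Z

open Classical in
/-- The linkage function π_F constructed from a set function F:
π_F(x,X) = max{F(A) : A ∈ [X, E−x]_{𝓕_{k−1}}} if x ∉ X and this interval is nonempty,
and π_F(x,X) = min{F(A) : A ∈ 𝓕_{k−1}} otherwise. -/
noncomputable def piF [DecidableEq α] (𝓕 : Finset (Finset α)) (k : ℕ)
    (F : Finset α → ℝ) (x : α) (X : Finset α) : ℝ :=
  if x ∉ X ∧ ∃ A ∈ 𝓕, A.card < k ∧ X ⊆ A ∧ x ∉ A then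
    sSup (F '' {A : Finset α | A ∈ 𝓕 ∧ A.card < k ∧ X ⊆ A ∧ x ∉ A})
  else
    sInf (F '' {A : Finset α | A ∈ 𝓕 ∧ A.card < k})

/-- An accessible nonempty set system is an antimatroid
iff it satisfies the interval property without upper bounds. -/
theorem statement_1 [DecidableEq α] (𝓕 : Finset (Finset α))
    (hne : 𝓕.Nonempty) (hacc : Accessible 𝓕) :
    IsAntimatroid 𝓕 ↔ IntervalWUB 𝓕 := by
  constructor
  · rintro ⟨-, -, hex⟩ X hX Y hY hXY x hxY hins
    obtain ⟨y, hy, hins'⟩ := hex (insert x X) hins Y hY (by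
      intro h; exact hxY (h (mem_insert_self x X)))
    have hyx : y = x := by
      rcases mem_sdiff.1 hy with ⟨hy1, hy2⟩
      rcases mem_insert.1 hy1 with h | h
      · exact h
      · exact absurd (hXY h) hy2
    rwa [hyx] at hins'
  · intro hI
    refine ⟨hne, hacc, ?_⟩
    intro X
    induction X using Finset.strongInduction with
    | _ X ih =>
      intro hX Y hY hXY
      have hXne : X.Nonempty := by
        rcases X.eq_empty_or_nonempty with h | h
        · subst h; exact absurd (empty_subset Y) hXY
        · exact h
      obtain ⟨z, hz, herase⟩ := hacc X hX hXne
      by_cases hsub : X.erase z ⊆ Y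
      · have hzY : z ∉ Y := by
          intro hzY
          apply hXY
          intro a ha
          by_cases haz : a = z
          · subst haz; exact hzY
          · exact hsub (mem_erase.2 ⟨haz, ha⟩)
        have : insert z Y ∈ 𝓕 := hI _ herase Y hY hsub z hzY (by rwa [insert_erase hz])
        exact ⟨z, mem_sdiff.2 ⟨hz, hzY⟩, this⟩
      · obtain ⟨x, hx, hins⟩ := ih (X.erase z) (erase_ssubset hz) herase Y hY hsub
        rcases mem_sdiff.1 hx with ⟨hx1, hx2⟩
        exact ⟨x, mem_sdiff.2 ⟨mem_of_mem_erase hx1, hx2⟩, hins⟩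
end

section
/- Let (E, 𝓕) be an antimatroid over a finite set E and let k ≤ |E|. Then the k-truncation (E, 𝓕_k) is accessible and satisfies the k-truncated interval property without upper bounds. -/
open Finset

variable {α : Type*}

/-- The k-truncation of an antimatroid is accessible and satisfies
the k-truncated interval property without upper bounds. -/
theorem statement_4 [Fintype α] [DecidableEq α] (𝓕 : Finset (Finset α)) (k : ℕ)
    (h : IsAntimatroid 𝓕) (hk : k ≤ Fintype.card α) :
    Accessible (trunc 𝓕 k) ∧ TruncIntervalWUB (trunc 𝓕 k) k := by
  obtain ⟨-, hacc, hex⟩ := h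
  constructor
  · intro X hX hne
    simp only [trunc, mem_filter] at hX
    obtain ⟨x, hx, hx'⟩ := hacc X hX.1 hne
    exact ⟨x, hx, by simp [trunc, hx', le_trans (card_le_card (erase_subset _ _)) hX.2]⟩
  · intro X hX Y hY hXk hYk hXY x hxY hxX
    simp only [trunc, mem_filter] at hX hY hxX ⊢
    have hns : ¬ insert x X ⊆ Y := fun h => hxY (h (mem_insert_self _ _))
    obtain ⟨z, hz, hz'⟩ := hex _ hxX.1 _ hY.1 hns
    simp only [mem_sdiff, mem_insert] at hz
    have : z = x := by
      rcases hz.1 with h | h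
      · exact h
      · exact absurd (hXY h) hz.2
    subst this
    refine ⟨hz', ?_⟩
    have := card_insert_le z Y
    omega
end

section
/- An accessible nonempty set system (E, 𝓕) of rank k is a k-truncated antimatroid (i.e., it equals the k-truncation of some antimatroid over E) if and only if it satisfies the k-truncated interval property without upper bounds. -/
open Finset

variable {α : Type*}

/-- From accessibility, the rank bound, and the truncated interval property
without upper bounds, we get the exchange property into sets of card < k. -/
theorem ex_of_acc [DecidableEq α] {𝓕 : Finset (Finset α)} {k : ℕ}
    (hacc : Accessible 𝓕) (hrk : ∀ X ∈ 𝓕, X.card ≤ k) (hI : TruncIntervalWUB 𝓕 k) :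
    ∀ X ∈ 𝓕, ∀ Y ∈ 𝓕, Y.card < k → ¬ X ⊆ Y → ∃ x ∈ X \ Y, insert x Y ∈ 𝓕 := by
  intro X
  induction X using Finset.strongInduction with
  | _ X ih =>
    intro hX Y hY hYk hns
    have hXne : X.Nonempty := by
      rcases Finset.eq_empty_or_nonempty X with h | h
      · exact absurd (h ▸ Finset.empty_subset Y) hns
      · exact h
    obtain ⟨x, hxX, hX'⟩ := hacc X hX hXne
    by_cases hsub : X.erase x ⊆ Y
    · have hxY : x ∉ Y := fun hxY => hns (fun a ha => by
        by_cases hax : a = x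
        · exact hax ▸ hxY
        · exact hsub (Finset.mem_erase.2 ⟨hax, ha⟩))
      have hXk' : (X.erase x).card < k := by
        have h1 := hrk X hX
        have h2 := Finset.card_erase_of_mem hxX
        have h3 := Finset.card_pos.2 hXne
        omega
      have hins : insert x (X.erase x) ∈ 𝓕 := by
        rw [Finset.insert_erase hxX]; exact hX
      exact ⟨x, Finset.mem_sdiff.2 ⟨hxX, hxY⟩,
        hI _ hX' _ hY hXk' hYk hsub x hxY hins⟩
    · obtain ⟨z, hz, hzY⟩ := ih (X.erase x) (Finset.erase_ssubset hxX) hX' Y hY hYk hsub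
      rw [Finset.mem_sdiff] at hz
      exact ⟨z, Finset.mem_sdiff.2 ⟨Finset.mem_of_mem_erase hz.1, hz.2⟩, hzY⟩

/-- Antimatroids (indeed, any system with the exchange property) are closed
under unions. -/
theorem union_mem_of_exchange [DecidableEq α] {𝓕 : Finset (Finset α)}
    (h2 : Exchange 𝓕) {X : Finset α} (hX : X ∈ 𝓕) :
    ∀ n : ℕ, ∀ Y ∈ 𝓕, (X \ Y).card ≤ n → X ∪ Y ∈ 𝓕 := by
  intro n
  induction n with
  | zero =>
    intro Y hY hc
    have hsub : X ⊆ Y := by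
      have := Finset.card_eq_zero.1 (Nat.le_zero.1 hc)
      rwa [Finset.sdiff_eq_empty_iff_subset] at this
    rwa [Finset.union_eq_right.2 hsub]
  | succ n ih =>
    intro Y hY hc
    by_cases hs : X ⊆ Y
    · rwa [Finset.union_eq_right.2 hs]
    · obtain ⟨x, hx, hins⟩ := h2 X hX Y hY hs
      rw [Finset.mem_sdiff] at hx
      have hcard : (X \ insert x Y).card ≤ n := by
        have he : X \ insert x Y = (X \ Y).erase x := by
          ext a
          simp only [Finset.mem_sdiff, Finset.mem_erase, Finset.mem_insert]
          tauto
        rw [he]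
        have hxm : x ∈ X \ Y := Finset.mem_sdiff.2 hx
        have := Finset.card_erase_of_mem hxm
        have := Finset.card_pos.2 ⟨x, hxm⟩
        omega
      have := ih (insert x Y) hins hcard
      rwa [Finset.union_insert,
        Finset.insert_eq_self.2 (Finset.mem_union_left _ hx.1)] at this

/-- An accessible nonempty set system of rank k is a k-truncated
antimatroid iff it satisfies the k-truncated interval property without upper bounds. -/
theorem statement_5 [DecidableEq α] (𝓕 : Finset (Finset α)) (k : ℕ)
    (hne : 𝓕.Nonempty) (hacc : Accessible 𝓕) (hr : rank 𝓕 = k) :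
    IsKTruncAntimatroid 𝓕 k ↔ TruncIntervalWUB 𝓕 k := by
  have hrk : ∀ X ∈ 𝓕, X.card ≤ k := fun X hX => hr ▸ Finset.le_sup (f := Finset.card) hX
  constructor
  · rintro ⟨𝓕', ⟨hne', hacc', hex'⟩, rfl⟩
    intro X hX Y hY hXk hYk hXY x hxY hins
    simp only [trunc, Finset.mem_filter] at hX hY hins ⊢
    have hun : (insert x X) ∪ Y ∈ 𝓕' :=
      union_mem_of_exchange hex' hins.1 _ Y hY.1 le_rfl
    have heq : (insert x X) ∪ Y = insert x Y := by
      rw [Finset.insert_union, Finset.union_eq_right.2 hXY]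
    rw [heq] at hun
    refine ⟨hun, ?_⟩
    rw [Finset.card_insert_of_notMem hxY]
    omega
  · intro hI
    classical
    set E : Finset α := 𝓕.sup id with hE
    have hXE : ∀ X ∈ 𝓕, X ⊆ E := fun X hX => Finset.le_sup (f := id) hX
    obtain ⟨A₀, hA₀, hA₀c⟩ := Finset.exists_mem_eq_sup 𝓕 hne Finset.card
    have hA₀k : A₀.card = k := by
      have h := hr; rw [rank] at h; omega
    set ext : Finset (Finset α) :=
      E.powerset.filter (fun X => k < X.card ∧ ∃ A ∈ 𝓕, A.card = k ∧ A ⊆ X) with hext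
    have hmem_ext : ∀ X, X ∈ ext ↔ X ⊆ E ∧ k < X.card ∧ ∃ A ∈ 𝓕, A.card = k ∧ A ⊆ X := by
      intro X
      simp [hext, Finset.mem_filter, Finset.mem_powerset]
    refine ⟨𝓕 ∪ ext, ⟨?_, ?_, ?_⟩, ?_⟩
    · exact hne.mono Finset.subset_union_left
    · -- Accessible
      intro X hX hXne
      rcases Finset.mem_union.1 hX with hX | hX
      · obtain ⟨x, hx, h⟩ := hacc X hX hXne
        exact ⟨x, hx, Finset.mem_union_left _ h⟩
      · rw [hmem_ext] at hX
        obtain ⟨hXsub, hXc, A, hA, hAc, hAX⟩ := hX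
        have : ¬ X ⊆ A := fun h => by
          have := Finset.card_le_card h; omega
        obtain ⟨x, hxX, hxA⟩ := Finset.not_subset.1 this
        refine ⟨x, hxX, ?_⟩
        have hAe : A ⊆ X.erase x := fun a ha =>
          Finset.mem_erase.2 ⟨fun h => hxA (h ▸ ha), hAX ha⟩
        have hce : (X.erase x).card = X.card - 1 := Finset.card_erase_of_mem hxX
        by_cases hk : k < (X.erase x).card
        · refine Finset.mem_union_right _ ((hmem_ext _).2 ⟨?_, hk, A, hA, hAc, hAe⟩)
          exact (Finset.erase_subset x X).trans hXsub
        · have : X.erase x = A := by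
            have := Finset.card_le_card hAe
            exact (Finset.eq_of_subset_of_card_le hAe (by omega)).symm
          rw [this]
          exact Finset.mem_union_left _ hA
    · -- Exchange
      intro X hX Y hY hns
      obtain ⟨x₀, hx₀X, hx₀Y⟩ := Finset.not_subset.1 hns
      have hXsubE : X ⊆ E := by
        rcases Finset.mem_union.1 hX with h | h
        · exact hXE X h
        · exact ((hmem_ext X).1 h).1
      have hYsubE : Y ⊆ E := by
        rcases Finset.mem_union.1 hY with h | h
        · exact hXE Y h
        · exact ((hmem_ext Y).1 h).1
      by_cases hYk : Y.card < k
      · -- Y is genuinely feasible of small card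
        have hYF : Y ∈ 𝓕 := by
          rcases Finset.mem_union.1 hY with h | h
          · exact h
          · exact absurd ((hmem_ext Y).1 h).2.1 (by omega)
        rcases Finset.mem_union.1 hX with hXF | hXext
        · obtain ⟨x, hx, h⟩ := ex_of_acc hacc hrk hI X hXF Y hYF hYk hns
          exact ⟨x, hx, Finset.mem_union_left _ h⟩
        · obtain ⟨hXsub, hXc, A, hA, hAc, hAX⟩ := (hmem_ext X).1 hXext
          have hnsA : ¬ A ⊆ Y := fun h => by
            have := Finset.card_le_card h; omega
          obtain ⟨x, hx, h⟩ := ex_of_acc hacc hrk hI A hA Y hYF hYk hnsA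
          rw [Finset.mem_sdiff] at hx
          exact ⟨x, Finset.mem_sdiff.2 ⟨hAX hx.1, hx.2⟩, Finset.mem_union_left _ h⟩
      · -- Y has card ≥ k: Y contains a feasible set of card k
        obtain ⟨B, hB, hBc, hBY⟩ : ∃ B ∈ 𝓕, B.card = k ∧ B ⊆ Y := by
          rcases Finset.mem_union.1 hY with h | h
          · refine ⟨Y, h, ?_, Finset.Subset.refl Y⟩
            have := hrk Y h; omega
          · obtain ⟨_, _, B, hB, hBc, hBY⟩ := (hmem_ext Y).1 h
            exact ⟨B, hB, hBc, hBY⟩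
        refine ⟨x₀, Finset.mem_sdiff.2 ⟨hx₀X, hx₀Y⟩, Finset.mem_union_right _ ?_⟩
        rw [hmem_ext]
        refine ⟨Finset.insert_subset (hXsubE hx₀X) hYsubE, ?_,
          B, hB, hBc, hBY.trans (Finset.subset_insert _ _)⟩
        rw [Finset.card_insert_of_notMem hx₀Y]
        omega
    · -- trunc equality
      ext X
      simp only [trunc, Finset.mem_filter, Finset.mem_union]
      constructor
      · intro hX
        refine ⟨Or.inl hX, hrk X hX⟩
      · rintro ⟨hX | hX, hXk⟩
        · exact hX
        · exact absurd ((hmem_ext X).1 hX).2.1 (by omega)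
end

section
/- Let (E, 𝓕) be a k-truncated antimatroid of rank k over a finite set E, and let π be a monotone linkage function on E. Define F(X) = min{π(x, X) : x ∈ Γ(X)} for X ∈ 𝓕_{k−1}. Then F is quasi-concave on 𝓕_{k−1}: for all X, Y ∈ 𝓕_{k−1} and every maximal feasible subset Z of X ∩ Y, F(Z) ≥ min(F(X), F(Y)). -/
open Finset

variable {α : Type*}

lemma anti_union [DecidableEq α] {𝓕 : Finset (Finset α)} (hE : Exchange 𝓕)
    (X : Finset α) (hX : X ∈ 𝓕) : ∀ Y ∈ 𝓕, X ∪ Y ∈ 𝓕 := by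
  suffices h : ∀ n (Y : Finset α), Y ∈ 𝓕 → (X \ Y).card ≤ n → X ∪ Y ∈ 𝓕 by
    intro Y hY; exact h _ Y hY le_rfl
  intro n
  induction n with
  | zero =>
    intro Y hY h
    have hXY : X ⊆ Y := by
      rw [← Finset.sdiff_eq_empty_iff_subset]
      exact Finset.card_eq_zero.mp (Nat.le_zero.mp h)
    rwa [Finset.union_eq_right.mpr hXY]
  | succ n ih =>
    intro Y hY h
    by_cases hXY : X ⊆ Y
    · rwa [Finset.union_eq_right.mpr hXY]
    · obtain ⟨y, hy, hins⟩ := hE X hX Y hY hXY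
      have hyX : y ∈ X := (Finset.mem_sdiff.mp hy).1
      have hcard : (X \ insert y Y).card ≤ n := by
        have : X \ insert y Y = (X \ Y).erase y := by
          ext a; simp [Finset.mem_sdiff, Finset.mem_erase, and_comm, and_left_comm]
        rw [this]
        have := Finset.card_erase_of_mem hy
        omega
      have := ih (insert y Y) hins hcard
      rwa [Finset.union_insert, Finset.insert_eq_self.mpr (Finset.mem_union_left Y hyX)] at this

/-- On a k-truncated antimatroid of rank k, the set function
F(X) = min{π(x,X) : x ∈ Γ(X)} determined by a monotone linkage function π
is quasi-concave on 𝓕_{k−1}. -/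
theorem statement_8 [Fintype α] [DecidableEq α] (𝓕 : Finset (Finset α)) (k : ℕ)
    (hT : IsKTruncAntimatroid 𝓕 k) (hr : rank 𝓕 = k)
    (π : α → Finset α → ℝ) (hπ : MonoLinkage π)
    (F : Finset α → ℝ)
    (hF : ∀ X ∈ 𝓕, X.card < k →
      F X = sInf ((fun x => π x X) '' ((Gamma 𝓕 X : Finset α) : Set α))) :
    ∀ X ∈ 𝓕, X.card < k → ∀ Y ∈ 𝓕, Y.card < k →
      ∀ Z : Finset α, MaxFeasible 𝓕 (X ∩ Y) Z →
        min (F X) (F Y) ≤ F Z := by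
  obtain ⟨𝓕', ⟨hne, hacc, hexch⟩, h𝓕⟩ := hT
  intro X hX hXk Y hY hYk Z hZ
  obtain ⟨hZF, hZsub, hZmax⟩ := hZ
  have hsub : ∀ {A : Finset α}, A ∈ 𝓕 → A ∈ 𝓕' := by
    intro A hA; rw [h𝓕, trunc, Finset.mem_filter] at hA; exact hA.1
  have hmem : ∀ {A : Finset α}, A ∈ 𝓕' → A.card ≤ k → A ∈ 𝓕 := by
    intro A h1 h2; rw [h𝓕, trunc, Finset.mem_filter]; exact ⟨h1, h2⟩
  have hZX : Z ⊆ X := hZsub.trans Finset.inter_subset_left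
  have hZY : Z ⊆ Y := hZsub.trans Finset.inter_subset_right
  have hZk : Z.card < k := lt_of_le_of_lt (Finset.card_le_card hZX) hXk
  -- Gamma is nonempty for feasible sets of card < k
  have hGamma : ∀ W ∈ 𝓕, W.card < k → (Gamma 𝓕 W).Nonempty := by
    intro W hW hWk
    obtain ⟨M, hM, hMc⟩ := Finset.exists_mem_eq_sup 𝓕 ⟨W, hW⟩ Finset.card
    have hMk : M.card = k := by rw [← hMc]; exact hr
    have hns : ¬ M ⊆ W := fun h => absurd (Finset.card_le_card h) (by omega)
    obtain ⟨x, hx, hins⟩ := hexch M (hsub hM) W (hsub hW) hns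
    have hxW : x ∉ W := (Finset.mem_sdiff.mp hx).2
    refine ⟨x, ?_⟩
    simp only [Gamma, Finset.mem_filter, Finset.mem_univ, true_and]
    exact ⟨hxW, hmem hins (by rw [Finset.card_insert_of_notMem hxW]; omega)⟩
  -- F Z is attained at some z ∈ Gamma 𝓕 Z
  have hSfin : ((fun x => π x Z) '' ((Gamma 𝓕 Z : Finset α) : Set α)).Finite :=
    ((Gamma 𝓕 Z).finite_toSet).image _
  have hSne : ((fun x => π x Z) '' ((Gamma 𝓕 Z : Finset α) : Set α)).Nonempty := by
    obtain ⟨z, hz⟩ := hGamma Z hZF hZk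
    exact ⟨π z Z, ⟨z, by simpa using hz, rfl⟩⟩
  have hFZ := hF Z hZF hZk
  have hmemInf := hSne.csInf_mem hSfin
  rw [← hFZ] at hmemInf
  obtain ⟨z, hzG, hzval⟩ := hmemInf
  have hzG' : z ∈ Gamma 𝓕 Z := by simpa using hzG
  simp only [Gamma, Finset.mem_filter, Finset.mem_univ, true_and] at hzG'
  obtain ⟨hzZ, hzins⟩ := hzG'
  -- z ∉ X ∩ Y
  have hzXY : z ∉ X ∩ Y := by
    intro hc
    have : insert z Z ⊆ X ∩ Y := Finset.insert_subset hc hZsub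
    have := hZmax (insert z Z) hzins (Finset.subset_insert z Z) this
    exact hzZ (this ▸ Finset.mem_insert_self z Z)
  -- key step
  have key : ∀ W ∈ 𝓕, W.card < k → z ∉ W → Z ⊆ W → F W ≤ F Z := by
    intro W hW hWk hzW hZW
    have hu : insert z Z ∪ W ∈ 𝓕' := anti_union hexch _ (hsub hzins) W (hsub hW)
    have heq : insert z Z ∪ W = insert z W := by
      rw [Finset.insert_union, Finset.union_eq_right.mpr hZW]
    rw [heq] at hu
    have hinsW : insert z W ∈ 𝓕 :=
      hmem hu (by rw [Finset.card_insert_of_notMem hzW]; omega)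
    have hzGW : z ∈ Gamma 𝓕 W := by
      simp only [Gamma, Finset.mem_filter, Finset.mem_univ, true_and]
      exact ⟨hzW, hinsW⟩
    have hle : F W ≤ π z W := by
      rw [hF W hW hWk]
      exact csInf_le (((Gamma 𝓕 W).finite_toSet.image _).bddBelow)
        ⟨z, by simpa using hzGW, rfl⟩
    calc F W ≤ π z W := hle
      _ ≤ π z Z := hπ z Z W hZW
      _ = F Z := hzval
  by_cases hzX : z ∈ X
  · have hzY : z ∉ Y := fun hzY => hzXY (Finset.mem_inter.mpr ⟨hzX, hzY⟩)
    exact (min_le_right _ _).trans (key Y hY hYk hzY hZY)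
  · exact (min_le_left _ _).trans (key X hX hXk hzX hZX)
end

section
/- Let (E, 𝓕) be a k-truncated antimatroid of rank k over a finite set E and let F be a quasi-concave real-valued function on 𝓕. Then for every X ∈ 𝓕_{k−1}, F(X) = min{π_F(x, X) : x ∈ Γ(X)}, where π_F is the monotone linkage function constructed from F. -/
open Finset

variable {α : Type*}

/-- On a k-truncated antimatroid of rank k, a quasi-concave
function F satisfies F(X) = min{π_F(x,X) : x ∈ Γ(X)} for every X ∈ 𝓕_{k−1}. -/
theorem statement_10 [Fintype α] [DecidableEq α] (𝓕 : Finset (Finset α)) (k : ℕ)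
    (hT : IsKTruncAntimatroid 𝓕 k) (hr : rank 𝓕 = k)
    (F : Finset α → ℝ)
    (hqc : ∀ X ∈ 𝓕, ∀ Y ∈ 𝓕, ∀ Z : Finset α,
      MaxFeasible 𝓕 (X ∩ Y) Z → min (F X) (F Y) ≤ F Z) :
    ∀ X ∈ 𝓕, X.card < k →
      F X = sInf ((fun x => piF 𝓕 k F x X) '' ((Gamma 𝓕 X : Finset α) : Set α)) := by
  classical
  obtain ⟨𝓖, ⟨hne, hacc, hexch⟩, h𝓕⟩ := hT
  have hmem : ∀ A : Finset α, A ∈ 𝓕 ↔ A ∈ 𝓖 ∧ A.card ≤ k := by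
    intro A; rw [h𝓕]; simp [trunc]
  intro X hX hXk
  have hstep : ∀ A : Finset α, A ∈ 𝓕 → ¬ A ⊆ X → ∃ x ∈ A \ X, x ∈ Gamma 𝓕 X := by
    intro A hA hAX
    obtain ⟨x, hxmem, hins⟩ := hexch A ((hmem A).1 hA).1 X ((hmem X).1 hX).1 hAX
    have hxX : x ∉ X := (Finset.mem_sdiff.1 hxmem).2
    have hcard : (insert x X).card ≤ k := by
      rw [Finset.card_insert_of_notMem hxX]; omega
    exact ⟨x, hxmem, by simp [Gamma, hxX, (hmem _).2 ⟨hins, hcard⟩]⟩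
  have hΓne : ∃ y, y ∈ Gamma 𝓕 X := by
    obtain ⟨Y, hY, hYc⟩ := Finset.exists_mem_eq_sup 𝓕 ⟨X, hX⟩ Finset.card
    have hYk : Y.card = k := by rw [← hr, rank, hYc]
    have hns : ¬ Y ⊆ X := fun h => by
      have := Finset.card_le_card h; omega
    obtain ⟨y, _, hy⟩ := hstep Y hY hns
    exact ⟨y, hy⟩
  have hGam : ∀ x, x ∈ Gamma 𝓕 X → x ∉ X ∧ insert x X ∈ 𝓕 := by
    intro x hx; simpa [Gamma] using hx
  have hpi : ∀ x ∈ Gamma 𝓕 X,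
      piF 𝓕 k F x X = sSup (F '' {A : Finset α | A ∈ 𝓕 ∧ A.card < k ∧ X ⊆ A ∧ x ∉ A}) := by
    intro x hx
    have hxX := (hGam x hx).1
    rw [piF, if_pos ⟨hxX, X, hX, hXk, Finset.Subset.refl X, hxX⟩]
  have hSfin : ∀ x : α, (F '' {A : Finset α | A ∈ 𝓕 ∧ A.card < k ∧ X ⊆ A ∧ x ∉ A}).Finite :=
    fun x => (Set.toFinite _).image F
  have hXmemS : ∀ x, x ∉ X →
      F X ∈ F '' {A : Finset α | A ∈ 𝓕 ∧ A.card < k ∧ X ⊆ A ∧ x ∉ A} :=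
    fun x hxX => ⟨X, ⟨hX, hXk, Finset.Subset.refl X, hxX⟩, rfl⟩
  have hB : ∀ x ∈ Gamma 𝓕 X, F X ≤ piF 𝓕 k F x X := by
    intro x hx
    rw [hpi x hx]
    exact le_csSup (hSfin x).bddAbove (hXmemS x (hGam x hx).1)
  have hC : ∃ x ∈ Gamma 𝓕 X, piF 𝓕 k F x X ≤ F X := by
    by_contra hcon
    push_neg at hcon
    have hAx : ∀ x ∈ Gamma 𝓕 X, ∃ A : Finset α,
        A ∈ 𝓕 ∧ A.card < k ∧ X ⊆ A ∧ x ∉ A ∧ F X < F A := by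
      intro x hx
      have hlt := hcon x hx
      rw [hpi x hx] at hlt
      have hmemSup := Set.Nonempty.csSup_mem ⟨F X, hXmemS x (hGam x hx).1⟩ (hSfin x)
      obtain ⟨A, hA, hFA⟩ := hmemSup
      exact ⟨A, hA.1, hA.2.1, hA.2.2.1, hA.2.2.2, by rw [hFA]; exact hlt⟩
    obtain ⟨y, hy⟩ := hΓne
    obtain ⟨A0, hA0⟩ := hAx y hy
    set W : Finset (Finset α) :=
      Finset.univ.filter (fun A => A ∈ 𝓕 ∧ A.card < k ∧ X ⊆ A ∧ F X < F A) with hW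
    have hA0W : A0 ∈ W := by simp [hW, hA0.1, hA0.2.1, hA0.2.2.1, hA0.2.2.2.2]
    obtain ⟨A, hAW, hAmin⟩ := Finset.exists_min_image W Finset.card ⟨A0, hA0W⟩
    have hA' : A ∈ 𝓕 ∧ A.card < k ∧ X ⊆ A ∧ F X < F A := by
      simpa [hW] using hAW
    have hASX : ¬ A ⊆ X := by
      intro h
      have hEq : A = X := Finset.Subset.antisymm h hA'.2.2.1
      rw [hEq] at hA'; exact lt_irrefl _ hA'.2.2.2
    obtain ⟨x, hxAX, hxΓ⟩ := hstep A hA'.1 hASX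
    have hxA : x ∈ A := (Finset.mem_sdiff.1 hxAX).1
    obtain ⟨A', hA'1, hA'2, hA'3, hxA', hA'5⟩ := hAx x hxΓ
    set T : Finset (Finset α) :=
      Finset.univ.filter (fun Z => Z ∈ 𝓕 ∧ X ⊆ Z ∧ Z ⊆ A ∩ A') with hT2
    have hXT : X ∈ T := by
      simp [hT2, hX, Finset.subset_inter hA'.2.2.1 hA'3]
    obtain ⟨Z, hZT, hZmax⟩ := Finset.exists_max_image T Finset.card ⟨X, hXT⟩
    have hZ : Z ∈ 𝓕 ∧ X ⊆ Z ∧ Z ⊆ A ∩ A' := by simpa [hT2] using hZT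
    have hmaxF : MaxFeasible 𝓕 (A ∩ A') Z := by
      refine ⟨hZ.1, hZ.2.2, ?_⟩
      intro Z' hZ'F hZZ' hZ'W
      have hZ'T : Z' ∈ T := by
        simp [hT2, hZ'F, hZ.2.1.trans hZZ', hZ'W]
      exact (Finset.eq_of_subset_of_card_le hZZ' (hZmax Z' hZ'T)).symm
    have hqcZ := hqc A hA'.1 A' hA'1 Z hmaxF
    have hFZ : F X < F Z := lt_of_lt_of_le (lt_min hA'.2.2.2 hA'5) hqcZ
    have hZA : Z ⊆ A := hZ.2.2.trans Finset.inter_subset_left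
    have hZW : Z ∈ W := by
      simp [hW, hZ.1, lt_of_le_of_lt (Finset.card_le_card hZA) hA'.2.1, hZ.2.1, hFZ]
    have hxZ : x ∉ Z := fun h => hxA' (Finset.mem_inter.1 (hZ.2.2 h)).2
    have hZerase : Z ⊆ A.erase x := Finset.subset_erase.2 ⟨hZA, hxZ⟩
    have hcZ : Z.card ≤ A.card - 1 := by
      have := Finset.card_le_card hZerase
      rwa [Finset.card_erase_of_mem hxA] at this
    have hA1 : 1 ≤ A.card := Finset.card_pos.2 ⟨x, hxA⟩
    have := hAmin Z hZW
    omega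
  obtain ⟨x₀, hx₀, hpix₀⟩ := hC
  have hTne : ((fun x => piF 𝓕 k F x X) '' ((Gamma 𝓕 X : Finset α) : Set α)).Nonempty :=
    ⟨_, ⟨x₀, hx₀, rfl⟩⟩
  have hTfin : ((fun x => piF 𝓕 k F x X) '' ((Gamma 𝓕 X : Finset α) : Set α)).Finite :=
    (Set.toFinite _).image _
  refine le_antisymm ?_ ?_
  · exact le_csInf hTne (by rintro b ⟨x, hx, rfl⟩; exact hB x hx)
  · exact le_trans (csInf_le hTfin.bddBelow ⟨x₀, hx₀, rfl⟩) hpix₀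
end

section
/- A real-valued set function F defined on a k-truncated antimatroid (E, 𝓕) of rank k is quasi-concave if and only if there exists a monotone linkage function π such that for each X ∈ 𝓕_{k−1}, F(X) = min{π(x, X) : x ∈ Γ(X)}. -/
open Finset

variable {α : Type*}

section AuxStatement11

lemma mem_gamma' [Fintype α] [DecidableEq α] {𝓕 : Finset (Finset α)} {X : Finset α} {x : α} :
    x ∈ Gamma 𝓕 X ↔ x ∉ X ∧ insert x X ∈ 𝓕 := by
  simp [Gamma]

lemma antimatroid_empty_mem [DecidableEq α] {𝓕' : Finset (Finset α)}
    (h : IsAntimatroid 𝓕') : ∅ ∈ 𝓕' := by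
  obtain ⟨⟨X0, hX0⟩, hAcc, -⟩ := h
  have key : ∀ n : ℕ, ∀ X ∈ 𝓕', X.card ≤ n → ∅ ∈ 𝓕' := by
    intro n
    induction n with
    | zero =>
      intro X hX hc
      rw [Nat.le_zero, Finset.card_eq_zero] at hc
      rwa [hc] at hX
    | succ n ih =>
      intro X hX hc
      rcases X.eq_empty_or_nonempty with rfl | hne
      · exact hX
      · obtain ⟨x, hx, he⟩ := hAcc X hX hne
        refine ih _ he ?_
        have := Finset.card_erase_of_mem hx
        have := Finset.card_pos.2 hne
        omega
  exact key X0.card X0 hX0 le_rfl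

lemma finite_FS [DecidableEq α] (𝓕 : Finset (Finset α)) (F : Finset α → ℝ)
    (P : Finset α → Prop) : (F '' {A : Finset α | A ∈ 𝓕 ∧ P A}).Finite :=
  (Set.Finite.subset 𝓕.finite_toSet (fun _ hA => hA.1)).image F

lemma piF_mono [DecidableEq α] (𝓕 : Finset (Finset α)) (k : ℕ) (F : Finset α → ℝ) :
    MonoLinkage (piF 𝓕 k F) := by
  classical
  intro x X Y hXY
  unfold piF
  by_cases hY : x ∉ Y ∧ ∃ A ∈ 𝓕, A.card < k ∧ Y ⊆ A ∧ x ∉ A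
  · obtain ⟨hxY, A, hA, hAk, hYA, hxA⟩ := hY
    have hX : x ∉ X ∧ ∃ A ∈ 𝓕, A.card < k ∧ X ⊆ A ∧ x ∉ A :=
      ⟨fun h => hxY (hXY h), ⟨A, hA, hAk, hXY.trans hYA, hxA⟩⟩
    rw [if_pos ⟨hxY, A, hA, hAk, hYA, hxA⟩, if_pos hX]
    refine csSup_le_csSup (finite_FS 𝓕 F _).bddAbove ⟨F A, A, ⟨hA, hAk, hYA, hxA⟩, rfl⟩ ?_
    rintro b ⟨B, ⟨hB, hBk, hYB, hxB⟩, rfl⟩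
    exact ⟨B, ⟨hB, hBk, hXY.trans hYB, hxB⟩, rfl⟩
  · rw [if_neg hY]
    by_cases hX : x ∉ X ∧ ∃ A ∈ 𝓕, A.card < k ∧ X ⊆ A ∧ x ∉ A
    · rw [if_pos hX]
      obtain ⟨hxX, A, hA, hAk, hXA, hxA⟩ := hX
      calc sInf (F '' {A : Finset α | A ∈ 𝓕 ∧ A.card < k})
          ≤ F A := csInf_le (finite_FS 𝓕 F _).bddBelow ⟨A, ⟨hA, hAk⟩, rfl⟩
        _ ≤ _ := le_csSup (finite_FS 𝓕 F _).bddAbove ⟨A, ⟨hA, hAk, hXA, hxA⟩, rfl⟩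
    · rw [if_neg hX]

end AuxStatement11

/-- A set function F on a k-truncated antimatroid of rank k is
quasi-concave iff there is a monotone linkage function π with
F(X) = min{π(x,X) : x ∈ Γ(X)} for each X ∈ 𝓕_{k−1}. -/
theorem statement_11 [Fintype α] [DecidableEq α] (𝓕 : Finset (Finset α)) (k : ℕ)
    (hT : IsKTruncAntimatroid 𝓕 k) (hr : rank 𝓕 = k)
    (F : Finset α → ℝ) :
    (∀ X ∈ 𝓕, X.card < k → ∀ Y ∈ 𝓕, Y.card < k →
      ∀ Z : Finset α, MaxFeasible 𝓕 (X ∩ Y) Z → min (F X) (F Y) ≤ F Z) ↔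
    (∃ π : α → Finset α → ℝ, MonoLinkage π ∧
      ∀ X ∈ 𝓕, X.card < k →
        F X = sInf ((fun x => π x X) '' ((Gamma 𝓕 X : Finset α) : Set α))) := by
  classical
  obtain ⟨𝓕', hAnti, h𝓕⟩ := hT
  have hmem : ∀ X : Finset α, X ∈ 𝓕 ↔ X ∈ 𝓕' ∧ X.card ≤ k := by
    intro X; rw [h𝓕]; simp [trunc]
  have hAnti' := hAnti
  obtain ⟨-, hAcc, hExch⟩ := hAnti'
  have hempty : ∅ ∈ 𝓕 := (hmem ∅).2 ⟨antimatroid_empty_mem hAnti, by simp⟩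
  have h𝓕ne : 𝓕.Nonempty := ⟨∅, hempty⟩
  obtain ⟨M, hM, hMk⟩ : ∃ M ∈ 𝓕, M.card = k := by
    obtain ⟨M, hM, hMk⟩ := Finset.exists_mem_eq_sup 𝓕 h𝓕ne Finset.card
    unfold rank at hr
    exact ⟨M, hM, hMk.symm.trans hr⟩
  have hGammaNe : ∀ X ∈ 𝓕, X.card < k → (Gamma 𝓕 X).Nonempty := by
    intro X hX hXk
    have hns : ¬ M ⊆ X := fun h => absurd (Finset.card_le_card h) (by omega)
    obtain ⟨x, hx, hins⟩ := hExch M ((hmem M).1 hM).1 X ((hmem X).1 hX).1 hns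
    rw [Finset.mem_sdiff] at hx
    refine ⟨x, mem_gamma'.2 ⟨hx.2, (hmem _).2 ⟨hins, ?_⟩⟩⟩
    rw [Finset.card_insert_of_notMem hx.2]; omega
  have hExt : ∀ X ∈ 𝓕, X.card < k → ∀ Z ∈ 𝓕, X ⊆ Z → X ≠ Z →
      ∃ z ∈ Z, z ∈ Gamma 𝓕 X := by
    intro X hX hXk Z hZ hsub hne
    have hns : ¬ Z ⊆ X := fun h => hne (Finset.Subset.antisymm hsub h)
    obtain ⟨z, hz, hins⟩ := hExch Z ((hmem Z).1 hZ).1 X ((hmem X).1 hX).1 hns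
    rw [Finset.mem_sdiff] at hz
    refine ⟨z, hz.1, mem_gamma'.2 ⟨hz.2, (hmem _).2 ⟨hins, ?_⟩⟩⟩
    rw [Finset.card_insert_of_notMem hz.2]; omega
  have hIvl : ∀ X ∈ 𝓕, ∀ Y ∈ 𝓕, X ⊆ Y → Y.card < k → ∀ x, x ∉ Y →
      insert x X ∈ 𝓕 → insert x Y ∈ 𝓕 := by
    intro X hX Y hY hXY hYk x hxY hins
    have hns : ¬ insert x X ⊆ Y := fun h => hxY (h (Finset.mem_insert_self x X))
    obtain ⟨y, hy, hins'⟩ := hExch _ ((hmem _).1 hins).1 Y ((hmem Y).1 hY).1 hns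
    rw [Finset.mem_sdiff, Finset.mem_insert] at hy
    rcases hy.1 with rfl | hyX
    · exact (hmem _).2 ⟨hins', by rw [Finset.card_insert_of_notMem hxY]; omega⟩
    · exact absurd (hXY hyX) hy.2
  have hMaxExt : ∀ W : Finset α, ∀ X ∈ 𝓕, X ⊆ W → ∃ Z, MaxFeasible 𝓕 W Z ∧ X ⊆ Z := by
    intro W X hX hXW
    have hsne : (𝓕.filter (fun Z => X ⊆ Z ∧ Z ⊆ W)).Nonempty :=
      ⟨X, Finset.mem_filter.2 ⟨hX, Finset.Subset.refl X, hXW⟩⟩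
    obtain ⟨Z, hZs, hZc⟩ := Finset.exists_mem_eq_sup _ hsne Finset.card
    rw [Finset.mem_filter] at hZs
    refine ⟨Z, ⟨hZs.1, hZs.2.2, ?_⟩, hZs.2.1⟩
    intro Z' hZ' hZZ' hZ'W
    have hZ's : Z' ∈ 𝓕.filter (fun Z => X ⊆ Z ∧ Z ⊆ W) :=
      Finset.mem_filter.2 ⟨hZ', hZs.2.1.trans hZZ', hZ'W⟩
    have hle : Z'.card ≤ Z.card := hZc ▸ Finset.le_sup hZ's
    exact (Finset.eq_of_subset_of_card_le hZZ' hle).symm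
  constructor
  · -- quasi-concave → exists monotone linkage
    intro hQC
    refine ⟨piF 𝓕 k F, piF_mono 𝓕 k F, ?_⟩
    intro X hX hXk
    have hΓne := hGammaNe X hX hXk
    have hpiF_eq : ∀ x ∈ Gamma 𝓕 X, piF 𝓕 k F x X =
        sSup (F '' {A : Finset α | A ∈ 𝓕 ∧ A.card < k ∧ X ⊆ A ∧ x ∉ A}) := by
      intro x hx
      obtain ⟨hxX, _⟩ := mem_gamma'.1 hx
      unfold piF
      rw [if_pos ⟨hxX, X, hX, hXk, Finset.Subset.refl X, hxX⟩]
    have hFle : ∀ x ∈ Gamma 𝓕 X, F X ≤ piF 𝓕 k F x X := by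
      intro x hx
      rw [hpiF_eq x hx]
      exact le_csSup (finite_FS 𝓕 F _).bddAbove
        ⟨X, ⟨hX, hXk, Finset.Subset.refl X, (mem_gamma'.1 hx).1⟩, rfl⟩
    obtain ⟨x₁, hx₁, hx₁le⟩ :
        ∃ x ∈ Gamma 𝓕 X, ∀ A ∈ 𝓕, A.card < k → X ⊆ A → x ∉ A → F A ≤ F X := by
      by_contra hcon
      push_neg at hcon
      have key : ∀ t : Finset α, t ⊆ Gamma 𝓕 X →
          ∃ Z ∈ 𝓕, Z.card < k ∧ X ⊆ Z ∧ F X < F Z ∧ ∀ y ∈ t, y ∉ Z := by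
        intro t
        induction t using Finset.induction_on with
        | empty =>
          intro _
          obtain ⟨x₀, hx₀⟩ := hΓne
          obtain ⟨A, hA, hAk, hXA, hxA, hFA⟩ := hcon x₀ hx₀
          exact ⟨A, hA, hAk, hXA, hFA, by simp⟩
        | @insert y t hyt ih =>
          intro hsub
          obtain ⟨Z, hZ, hZk, hXZ, hFZ, havoid⟩ :=
            ih (fun a ha => hsub (Finset.mem_insert_of_mem ha))
          obtain ⟨A, hA, hAk, hXA, hyA, hFA⟩ := hcon y (hsub (Finset.mem_insert_self y t))
          obtain ⟨Z', hZ'max, hXZ'⟩ := hMaxExt (Z ∩ A) X hX (Finset.subset_inter hXZ hXA)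
          have hmin := hQC Z hZ hZk A hA hAk Z' hZ'max
          have hZ'Z : Z' ⊆ Z := hZ'max.2.1.trans Finset.inter_subset_left
          have hZ'A : Z' ⊆ A := hZ'max.2.1.trans Finset.inter_subset_right
          refine ⟨Z', hZ'max.1, (Finset.card_le_card hZ'Z).trans_lt hZk, hXZ',
            lt_of_lt_of_le (lt_min hFZ hFA) hmin, ?_⟩
          intro a ha
          rcases Finset.mem_insert.1 ha with rfl | hat
          · exact fun h => hyA (hZ'A h)
          · exact fun h => havoid a hat (hZ'Z h)
      obtain ⟨Z, hZ, hZk, hXZ, hFZ, havoid⟩ := key (Gamma 𝓕 X) (Finset.Subset.refl _)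
      have hXneZ : X ≠ Z := fun h => absurd hFZ (by rw [← h]; exact lt_irrefl _)
      obtain ⟨z, hzZ, hzΓ⟩ := hExt X hX hXk Z hZ hXZ hXneZ
      exact havoid z hzΓ hzZ
    have himgfin : ((fun x => piF 𝓕 k F x X) '' ↑(Gamma 𝓕 X)).Finite :=
      (Gamma 𝓕 X).finite_toSet.image _
    apply le_antisymm
    · apply le_csInf (hΓne.to_set.image _)
      rintro b ⟨x, hx, rfl⟩
      exact hFle x hx
    · refine le_trans (csInf_le himgfin.bddBelow ⟨x₁, hx₁, rfl⟩) ?_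
      show piF 𝓕 k F x₁ X ≤ F X
      rw [hpiF_eq x₁ hx₁]
      refine csSup_le ⟨F X, X, ⟨hX, hXk, Finset.Subset.refl X, (mem_gamma'.1 hx₁).1⟩, rfl⟩ ?_
      rintro b ⟨A, ⟨hA, hAk, hXA, hxA⟩, rfl⟩
      exact hx₁le A hA hAk hXA hxA
  · -- monotone linkage → quasi-concave
    rintro ⟨π, hπ, hπF⟩
    intro X hX hXk Y hY hYk Z hZmax
    obtain ⟨hZ𝓕, hZsub, hZmaxp⟩ := hZmax
    have hZX : Z ⊆ X := hZsub.trans Finset.inter_subset_left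
    have hZY : Z ⊆ Y := hZsub.trans Finset.inter_subset_right
    have hZk : Z.card < k := (Finset.card_le_card hZX).trans_lt hXk
    have hΓZ := hGammaNe Z hZ𝓕 hZk
    have hFZ := hπF Z hZ𝓕 hZk
    have hfin : ((fun x => π x Z) '' ↑(Gamma 𝓕 Z)).Finite :=
      (Gamma 𝓕 Z).finite_toSet.image _
    obtain ⟨x₀, hx₀Γ, hx₀eq⟩ : ∃ x₀ ∈ Gamma 𝓕 Z, π x₀ Z = F Z := by
      have hm := (hΓZ.to_set.image (fun x => π x Z)).csInf_mem hfin
      rw [← hFZ] at hm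
      obtain ⟨x₀, hx₀, heq⟩ := hm
      exact ⟨x₀, hx₀, heq⟩
    obtain ⟨hx₀Z, hins₀⟩ := mem_gamma'.1 hx₀Γ
    have hx₀not : x₀ ∉ X ∩ Y := by
      intro hmem'
      have heq : insert x₀ Z = Z := hZmaxp (insert x₀ Z) hins₀ (Finset.subset_insert x₀ Z)
        (Finset.insert_subset hmem' hZsub)
      exact hx₀Z (heq ▸ Finset.mem_insert_self x₀ Z)
    rw [Finset.mem_inter, not_and_or] at hx₀not
    rcases hx₀not with hx₀X | hx₀Y
    · have hins : insert x₀ X ∈ 𝓕 := hIvl Z hZ𝓕 X hX hZX hXk x₀ hx₀X hins₀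
      have hx₀ΓX : x₀ ∈ Gamma 𝓕 X := mem_gamma'.2 ⟨hx₀X, hins⟩
      have h1 : F X ≤ π x₀ X := by
        rw [hπF X hX hXk]
        exact csInf_le ((Gamma 𝓕 X).finite_toSet.image _).bddBelow ⟨x₀, hx₀ΓX, rfl⟩
      calc min (F X) (F Y) ≤ F X := min_le_left _ _
        _ ≤ π x₀ X := h1
        _ ≤ π x₀ Z := hπ x₀ Z X hZX
        _ = F Z := hx₀eq
    · have hins : insert x₀ Y ∈ 𝓕 := hIvl Z hZ𝓕 Y hY hZY hYk x₀ hx₀Y hins₀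
      have hx₀ΓY : x₀ ∈ Gamma 𝓕 Y := mem_gamma'.2 ⟨hx₀Y, hins⟩
      have h1 : F Y ≤ π x₀ Y := by
        rw [hπF Y hY hYk]
        exact csInf_le ((Gamma 𝓕 Y).finite_toSet.image _).bddBelow ⟨x₀, hx₀ΓY, rfl⟩
      calc min (F X) (F Y) ≤ F Y := min_le_right _ _
        _ ≤ π x₀ Y := h1
        _ ≤ π x₀ Z := hπ x₀ Z Y hZY
        _ = F Z := hx₀eq
end

section
/- Let (E, 𝓕) be a k-truncated antimatroid of rank k over a finite set E, let X ∈ 𝓕_{k−1}, and for each x ∈ Γ(X) let A^x ∈ 𝓕_{k−1} satisfy X ⊆ A^x ⊆ E − {x}. Then the unique maximal feasible subset of ⋂_{x ∈ Γ(X)} A^x is X itself. -/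
open Finset

variable {α : Type*}

/-- In a k-truncated antimatroid of rank k, for X ∈ 𝓕_{k−1} and
sets A^x ∈ [X, E−x]_{𝓕_{k−1}} for each x ∈ Γ(X), the unique maximal feasible
subset of ⋂_{x ∈ Γ(X)} A^x is X itself. -/
theorem statement_12 [Fintype α] [DecidableEq α] (𝓕 : Finset (Finset α)) (k : ℕ)
    (hT : IsKTruncAntimatroid 𝓕 k) (hr : rank 𝓕 = k)
    (X : Finset α) (hX : X ∈ 𝓕) (hXk : X.card < k)
    (A : α → Finset α)
    (hA : ∀ x ∈ Gamma 𝓕 X, A x ∈ 𝓕 ∧ (A x).card < k ∧ X ⊆ A x ∧ x ∉ A x) :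
    ∀ Z : Finset α, MaxFeasible 𝓕 ((Gamma 𝓕 X).inf A) Z ↔ Z = X := by
  obtain ⟨𝓕', ⟨hne, hacc, hexch⟩, h𝓕⟩ := hT
  set W := (Gamma 𝓕 X).inf A with hW
  have hmem : ∀ Y ∈ 𝓕, Y ∈ 𝓕' ∧ Y.card ≤ k := by
    intro Y hY
    rw [h𝓕, trunc, Finset.mem_filter] at hY
    exact hY
  have hmem' : ∀ Y ∈ 𝓕', Y.card ≤ k → Y ∈ 𝓕 := by
    intro Y hY hk
    rw [h𝓕, trunc, Finset.mem_filter]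
    exact ⟨hY, hk⟩
  have hXW : X ⊆ W := Finset.le_inf (fun x hx => (hA x hx).2.2.1)
  -- key: any feasible subset of W is a subset of X
  have key : ∀ Z ∈ 𝓕, Z ⊆ W → Z ⊆ X := by
    intro Z hZ hZW
    by_contra hns
    obtain ⟨x, hxZ, hins⟩ := hexch Z (hmem Z hZ).1 X (hmem X hX).1 hns
    rw [Finset.mem_sdiff] at hxZ
    have hcard : (insert x X).card ≤ k := by
      rw [Finset.card_insert_of_notMem hxZ.2]
      omega
    have hins𝓕 : insert x X ∈ 𝓕 := hmem' _ hins hcard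
    have hxG : x ∈ Gamma 𝓕 X := by
      rw [Gamma, Finset.mem_filter]
      exact ⟨Finset.mem_univ x, hxZ.2, hins𝓕⟩
    have : W ⊆ A x := Finset.inf_le hxG
    exact (hA x hxG).2.2.2 (this (hZW hxZ.1))
  intro Z
  constructor
  · rintro ⟨hZ𝓕, hZW, hmax⟩
    exact (hmax X hX (key Z hZ𝓕 hZW) hXW).symm
  · rintro rfl
    exact ⟨hX, hXW, fun Z' hZ' hXZ' hZ'W =>
      Finset.Subset.antisymm (key Z' hZ' hZ'W) hXZ'⟩
end

section
/- Let (E, 𝓕) be a k-truncated antimatroid of rank k over a finite set E, let π be a monotone linkage function, and define F(X) = min{π(x, X) : x ∈ Γ(X)} for X ∈ 𝓕_{k−1}. Then π_F ≤ π on 𝓕_{k−1}: for every X ∈ 𝓕_{k−1} and every x ∈ Γ(X), π_F(x, X) ≤ π(x, X). -/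
open Finset

variable {α : Type*}

/-- If F(X) = min{π(x,X) : x ∈ Γ(X)} for a monotone linkage
function π on a k-truncated antimatroid of rank k, then π_F ≤ π on 𝓕_{k−1}. -/
theorem statement_13 [Fintype α] [DecidableEq α] (𝓕 : Finset (Finset α)) (k : ℕ)
    (hT : IsKTruncAntimatroid 𝓕 k) (hr : rank 𝓕 = k)
    (π : α → Finset α → ℝ) (hπ : MonoLinkage π)
    (F : Finset α → ℝ)
    (hF : ∀ X ∈ 𝓕, X.card < k →
      F X = sInf ((fun x => π x X) '' ((Gamma 𝓕 X : Finset α) : Set α))) :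
    ∀ X ∈ 𝓕, X.card < k → ∀ x ∈ Gamma 𝓕 X, piF 𝓕 k F x X ≤ π x X := by
  obtain ⟨𝓕', ⟨hne, hacc, hex⟩, h𝓕⟩ := hT
  have hmem : ∀ A : Finset α, A ∈ 𝓕 ↔ A ∈ 𝓕' ∧ A.card ≤ k := by
    intro A; rw [h𝓕, trunc, Finset.mem_filter]
  intro X hX hXk x hxΓ
  rw [Gamma, Finset.mem_filter] at hxΓ
  obtain ⟨-, hxX, hins⟩ := hxΓ
  have hcond : x ∉ X ∧ ∃ A ∈ 𝓕, A.card < k ∧ X ⊆ A ∧ x ∉ A :=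
    ⟨hxX, X, hX, hXk, subset_refl X, hxX⟩
  rw [piF, if_pos hcond]
  apply csSup_le
  · exact ⟨F X, Set.mem_image_of_mem F ⟨hX, hXk, subset_refl X, hxX⟩⟩
  · rintro b ⟨A, ⟨hA, hAk, hXA, hxA⟩, rfl⟩
    -- insert x A ∈ 𝓕 by exchange
    have hinsA : insert x A ∈ 𝓕 := by
      have h1 : insert x X ∈ 𝓕' := ((hmem _).1 hins).1
      have h2 : A ∈ 𝓕' := ((hmem _).1 hA).1
      have hns : ¬ insert x X ⊆ A := fun h => hxA (h (Finset.mem_insert_self x X))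
      obtain ⟨y, hy, hyA⟩ := hex _ h1 _ h2 hns
      rw [Finset.mem_sdiff, Finset.mem_insert] at hy
      have hyx : y = x := by
        rcases hy.1 with h | h
        · exact h
        · exact absurd (hXA h) hy.2
      subst hyx
      refine (hmem _).2 ⟨hyA, ?_⟩
      calc (insert y A).card ≤ A.card + 1 := Finset.card_insert_le _ _
        _ ≤ k := hAk
    have hxΓA : x ∈ Gamma 𝓕 A := by
      rw [Gamma, Finset.mem_filter]
      exact ⟨Finset.mem_univ x, hxA, hinsA⟩
    rw [hF A hA hAk]
    calc sInf ((fun y => π y A) '' ((Gamma 𝓕 A : Finset α) : Set α)) ≤ π x A := by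
          apply csInf_le
          · exact (((Gamma 𝓕 A : Finset α) : Set α).toFinite.image _).bddBelow
          · exact Set.mem_image_of_mem _ (by exact_mod_cast hxΓA)
      _ ≤ π x X := hπ x X A hXA
end

section
/- Let E be a finite nonempty set. A function F : 2^E → ℝ satisfies F(X ∩ Y) ≥ min(F(X), F(Y)) for all X, Y ⊆ E if and only if there exists a monotone linkage function π such that F(X) = min{π(x, X) : x ∈ E − X} for every proper subset X ⊊ E. -/
open Finset

variable {α : Type*}

/-! The linkage function is `π(x, X) = max {F A : X - x ⊆ A ⊆ E - x}`; monotonicity is then just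
the shrinking of this interval as `X` grows, and for `x ∉ X` its lower end is `X` itself, so
`F X ≤ π(x, X)`. Equality for some `x ∉ X` comes from quasi-concavity: the sets `A ⊇ X` with
`F A > F X` are closed under intersection, so their intersection `B` still satisfies `F B > F X`,
hence `B ≠ X`, and any `y ∈ B - X` is avoided by no such `A`. Conversely, for `x ∉ X ∩ Y`, say
`x ∉ X`, monotonicity gives `F X ≤ π(x, X) ≤ π(x, X ∩ Y)`. -/

lemma lt_apply_inf'_of_forall_lt {β γ ι : Type*} [SemilatticeInf β] [LinearOrder γ]
    {F : β → γ} (hF : ∀ a b, min (F a) (F b) ≤ F (a ⊓ b)) {c : γ} {s : Finset ι}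
    (hs : s.Nonempty) {f : ι → β} (hlt : ∀ i ∈ s, c < F (f i)) : c < F (s.inf' hs f) :=
  Finset.inf'_induction hs f (p := fun b => c < F b)
    (fun _ h₁ _ h₂ => (lt_min h₁ h₂).trans_le (hF _ _)) hlt

section Linkage

variable [Fintype α]

lemma apply_le_of_eq_sInf {π : α → Finset α → ℝ} {F : Finset α → ℝ}
    (hF : ∀ X : Finset α, X ≠ univ → F X = sInf ((fun x => π x X) '' {x : α | x ∉ X}))
    {x : α} {X : Finset α} (hx : x ∉ X) : F X ≤ π x X := by
  rw [hF X fun h => hx (h ▸ mem_univ x)]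
  exact csInf_le (Set.toFinite _).bddBelow ⟨x, hx, rfl⟩

variable [DecidableEq α]

lemma exists_notMem_forall_apply_le {F : Finset α → ℝ}
    (hF : ∀ X Y : Finset α, min (F X) (F Y) ≤ F (X ∩ Y)) {X : Finset α} (hX : X ≠ univ) :
    ∃ y ∉ X, ∀ A, X ⊆ A → y ∉ A → F A ≤ F X := by
  set U := univ.filter fun A => X ⊆ A ∧ F X < F A
  obtain ⟨B, hXB, hBU⟩ : ∃ B, X ⊂ B ∧ ∀ A ∈ U, B ⊆ A := by
    rcases U.eq_empty_or_nonempty with hU | hU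
    · exact ⟨univ, ssubset_univ_iff.2 hX, by simp [hU]⟩
    · have hXU : X ⊆ U.inf' hU id := le_inf' hU id fun A hA => (mem_filter.1 hA).2.1
      have hFU : F X < F (U.inf' hU id) :=
        lt_apply_inf'_of_forall_lt hF hU fun A hA => (mem_filter.1 hA).2.2
      exact ⟨_, ssubset_of_subset_of_ne hXU fun h => hFU.ne (congrArg F h),
        fun A hA => inf'_le id hA⟩
  obtain ⟨y, hyB, hyX⟩ := exists_of_ssubset hXB
  exact ⟨y, hyX, fun A hXA hyA => not_lt.1 fun hlt =>
    hyA (hBU A (mem_filter.2 ⟨mem_univ A, hXA, hlt⟩) hyB)⟩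

noncomputable def maxLinkage (F : Finset α → ℝ) (x : α) (X : Finset α) : ℝ :=
  sSup (F '' Set.Icc (X.erase x) (univ.erase x))

lemma monoLinkage_maxLinkage (F : Finset α → ℝ) : MonoLinkage (maxLinkage F) := by
  intro x X Y hXY
  refine csSup_le_csSup (Set.toFinite _).bddAbove ?_ ?_
  · exact ⟨F (Y.erase x), _, ⟨le_rfl, erase_subset_erase x (subset_univ Y)⟩, rfl⟩
  · exact Set.image_mono (Set.Icc_subset_Icc_left (erase_subset_erase x hXY))

lemma apply_le_maxLinkage (F : Finset α → ℝ) {x : α} {X : Finset α} (hx : x ∉ X) :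
    F X ≤ maxLinkage F x X := by
  rw [maxLinkage, erase_eq_of_notMem hx]
  exact le_csSup (Set.toFinite _).bddAbove ⟨X, ⟨le_rfl, subset_erase.2 ⟨subset_univ X, hx⟩⟩, rfl⟩

lemma maxLinkage_le {F : Finset α → ℝ} {x : α} {X : Finset α} {c : ℝ} (hx : x ∉ X)
    (hc : ∀ A, X ⊆ A → x ∉ A → F A ≤ c) : maxLinkage F x X ≤ c := by
  rw [maxLinkage, erase_eq_of_notMem hx]
  refine csSup_le ⟨F X, X, ⟨le_rfl, subset_erase.2 ⟨subset_univ X, hx⟩⟩, rfl⟩ ?_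
  rintro _ ⟨A, ⟨hXA, hAx⟩, rfl⟩
  exact hc A hXA (subset_erase.1 hAx).2

lemma isLeast_maxLinkage {F : Finset α → ℝ}
    (hF : ∀ X Y : Finset α, min (F X) (F Y) ≤ F (X ∩ Y)) {X : Finset α} (hX : X ≠ univ) :
    IsLeast ((fun x => maxLinkage F x X) '' {x | x ∉ X}) (F X) := by
  obtain ⟨y, hyX, hy⟩ := exists_notMem_forall_apply_le hF hX
  refine ⟨⟨y, hyX, (maxLinkage_le hyX hy).antisymm (apply_le_maxLinkage F hyX)⟩, ?_⟩
  rintro _ ⟨x, hx, rfl⟩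
  exact apply_le_maxLinkage F hx

lemma min_le_apply_inter_of_eq_sInf {π : α → Finset α → ℝ} (hπ : MonoLinkage π)
    {F : Finset α → ℝ}
    (hF : ∀ X : Finset α, X ≠ univ → F X = sInf ((fun x => π x X) '' {x : α | x ∉ X}))
    (X Y : Finset α) : min (F X) (F Y) ≤ F (X ∩ Y) := by
  by_cases hXY : X ∩ Y = univ
  · obtain ⟨rfl, rfl⟩ : X = univ ∧ Y = univ := inf_eq_top_iff.1 hXY
    rw [inter_self]
    exact min_le_left _ _
  · obtain ⟨z, -, hz⟩ := exists_of_ssubset (ssubset_univ_iff.2 hXY)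
    rw [hF _ hXY]
    refine le_csInf ⟨π z (X ∩ Y), z, hz, rfl⟩ ?_
    rintro _ ⟨x, hx, rfl⟩
    rcases not_and_or.1 (mt mem_inter.2 hx) with hxX | hxY
    · exact (min_le_left _ _).trans
        ((apply_le_of_eq_sInf hF hxX).trans (hπ x _ _ inter_subset_left))
    · exact (min_le_right _ _).trans
        ((apply_le_of_eq_sInf hF hxY).trans (hπ x _ _ inter_subset_right))

end Linkage

theorem statement_16_general [Fintype α] [DecidableEq α]
    (F : Finset α → ℝ) :
    (∀ X Y : Finset α, min (F X) (F Y) ≤ F (X ∩ Y)) ↔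
    (∃ π : α → Finset α → ℝ, MonoLinkage π ∧
      ∀ X : Finset α, X ≠ Finset.univ →
        F X = sInf ((fun x => π x X) '' {x : α | x ∉ X})) := by
  constructor
  · intro hF
    exact ⟨maxLinkage F, monoLinkage_maxLinkage F,
      fun X hX => (isLeast_maxLinkage hF hX).csInf_eq.symm⟩
  · rintro ⟨π, hπ, hF⟩
    exact min_le_apply_inter_of_eq_sInf hπ hF

/-- (Boolean case.) A function F : 2^E → ℝ on a finite nonempty E
satisfies F(X ∩ Y) ≥ min(F(X), F(Y)) for all X, Y ⊆ E iff there is a monotone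
linkage function π with F(X) = min{π(x,X) : x ∈ E − X} for every proper X ⊊ E. -/
theorem statement_16 [Fintype α] [DecidableEq α] [Nonempty α]
    (F : Finset α → ℝ) :
    (∀ X Y : Finset α, min (F X) (F Y) ≤ F (X ∩ Y)) ↔
    (∃ π : α → Finset α → ℝ, MonoLinkage π ∧
      ∀ X : Finset α, X ≠ Finset.univ →
        F X = sInf ((fun x => π x X) '' {x : α | x ∉ X})) :=
  statement_16_general F
end
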